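/- arXiv:2002.08783 — 2 statements merged into one kernel-verified Lean document; each statement's English description precedes it below -/
import Mathlib

section
/- If f is a posynomial in n positive real variables, i.e., a finite sum of monomials f(v) = Σₖ cₖ·v₁^{a₁ₖ}···vₙ^{aₙₖ} with all cₖ > 0, then the function x ↦ log f(exp(x)) is convex on ℝⁿ. -/
/-!
Substituting `v = exp x` turns each monomial into the exponential of an affine function of `x`,
so each term is log-convex. By Hölder's inequality `∑ uₖ^p vₖ^q ≤ (∑ uₖ)^p (∑ vₖ)^q`
(`p + q = 1`), a finite sum of log-convex functions is again log-convex.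
-/

open Real Finset

theorem Real.sum_rpow_mul_rpow_le {ι : Type*} (s : Finset ι) {u v : ι → ℝ}
    (hu : ∀ k ∈ s, 0 ≤ u k) (hv : ∀ k ∈ s, 0 ≤ v k) {p q : ℝ} (hp : 0 < p) (hq : 0 < q)
    (hpq : p + q = 1) :
    ∑ k ∈ s, u k ^ p * v k ^ q ≤ (∑ k ∈ s, u k) ^ p * (∑ k ∈ s, v k) ^ q := by
  have holder := inner_le_Lp_mul_Lq_of_nonneg s (HolderConjugate.inv_inv hp hq hpq)
    (fun k hk => rpow_nonneg (hu k hk) p) (fun k hk => rpow_nonneg (hv k hk) q)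
  rwa [sum_congr rfl fun k hk => rpow_rpow_inv (hu k hk) hp.ne',
    sum_congr rfl fun k hk => rpow_rpow_inv (hv k hk) hq.ne', one_div, one_div,
    inv_inv, inv_inv] at holder

theorem le_rpow_mul_rpow_of_convexOn_log {E : Type*} [AddCommGroup E] [Module ℝ E]
    {s : Set E} {g : E → ℝ} (hpos : ∀ x ∈ s, 0 < g x) (hg : ConvexOn ℝ s fun x => log (g x))
    {x y : E} (hx : x ∈ s) (hy : y ∈ s) {p q : ℝ} (hp : 0 ≤ p) (hq : 0 ≤ q) (hpq : p + q = 1) :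
    g (p • x + q • y) ≤ g x ^ p * g y ^ q := by
  rw [rpow_def_of_pos (hpos x hx), rpow_def_of_pos (hpos y hy), ← exp_add,
    ← exp_log (hpos _ (hg.1 hx hy hp hq hpq)), exp_le_exp, mul_comm (log _), mul_comm (log _)]
  exact hg.2 hx hy hp hq hpq

theorem ConvexOn.log_sum {ι E : Type*} [AddCommGroup E] [Module ℝ E] {s : Set E}
    (hs : Convex ℝ s) {t : Finset ι} {g : ι → E → ℝ} (hpos : ∀ k ∈ t, ∀ x ∈ s, 0 < g k x)
    (hg : ∀ k ∈ t, ConvexOn ℝ s fun x => log (g k x)) :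
    ConvexOn ℝ s fun x => log (∑ k ∈ t, g k x) := by
  rcases t.eq_empty_or_nonempty with rfl | ht
  · simpa using convexOn_const 0 hs
  have hsum_pos : ∀ x ∈ s, 0 < ∑ k ∈ t, g k x := fun x hx =>
    sum_pos (fun k hk => hpos k hk x hx) ht
  refine convexOn_iff_forall_pos.2 ⟨hs, fun x hx y hy p q hp hq hpq => ?_⟩
  have hterm : ∀ k ∈ t, g k (p • x + q • y) ≤ g k x ^ p * g k y ^ q := fun k hk =>
    le_rpow_mul_rpow_of_convexOn_log (hpos k hk) (hg k hk) hx hy hp.le hq.le hpq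
  calc log (∑ k ∈ t, g k (p • x + q • y))
      ≤ log (∑ k ∈ t, g k x ^ p * g k y ^ q) :=
        log_le_log (hsum_pos _ (hs hx hy hp.le hq.le hpq)) (sum_le_sum hterm)
    _ ≤ log ((∑ k ∈ t, g k x) ^ p * (∑ k ∈ t, g k y) ^ q) :=
        log_le_log (sum_pos (fun k hk => mul_pos (rpow_pos_of_pos (hpos k hk x hx) p)
          (rpow_pos_of_pos (hpos k hk y hy) q)) ht)
          (sum_rpow_mul_rpow_le t (fun k hk => (hpos k hk x hx).le)
            (fun k hk => (hpos k hk y hy).le) hp hq hpq)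
    _ = p • log (∑ k ∈ t, g k x) + q • log (∑ k ∈ t, g k y) := by
        have hx' := hsum_pos x hx
        have hy' := hsum_pos y hy
        rw [log_mul (by positivity) (by positivity), log_rpow hx', log_rpow hy', smul_eq_mul,
          smul_eq_mul]

theorem log_mul_prod_exp_rpow {ι : Type*} [Fintype ι] {c : ℝ} (hc : 0 < c) (a x : ι → ℝ) :
    log (c * ∏ i, exp (x i) ^ a i) = log c + ∑ i, a i * x i := by
  rw [log_mul hc.ne' (by positivity), log_prod (fun i _ => by positivity)]
  simp_rw [log_rpow (exp_pos _), log_exp]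

theorem convexOn_log_mul_prod_exp_rpow {ι : Type*} [Fintype ι] {c : ℝ} (hc : 0 < c)
    (a : ι → ℝ) : ConvexOn ℝ Set.univ fun x : ι → ℝ => log (c * ∏ i, exp (x i) ^ a i) := by
  simp_rw [log_mul_prod_exp_rpow hc]
  have hlinear : ConvexOn ℝ Set.univ fun x : ι → ℝ => ∑ i, a i * x i :=
    ((∑ i, a i • LinearMap.proj i : (ι → ℝ) →ₗ[ℝ] ℝ).convexOn convex_univ).congr
      fun x _ => by simp
  exact (convexOn_const _ convex_univ).add hlinear

/-- If `f` is a posynomial in `n` positive real variables, i.e. a finite sum of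
monomials `f v = ∑ k, c k * ∏ i, v i ^ a k i` with all `c k > 0`, then the
function `x ↦ log (f (exp x))` is convex on `ℝⁿ`. -/
theorem posynomial_log_exp_convex (n m : ℕ) (f : (Fin n → ℝ) → ℝ)
    (c : Fin m → ℝ) (a : Fin m → Fin n → ℝ) (hc : ∀ k, 0 < c k)
    (hf : ∀ v : Fin n → ℝ, (∀ i, 0 < v i) →
      f v = ∑ k, c k * ∏ i, v i ^ a k i) :
    ConvexOn ℝ Set.univ (fun x : Fin n → ℝ =>
      Real.log (f (fun i => Real.exp (x i)))) := by
  have hf_exp : ∀ x : Fin n → ℝ,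
      f (fun i => exp (x i)) = ∑ k, c k * ∏ i, exp (x i) ^ a k i :=
    fun x => hf _ fun i => exp_pos (x i)
  simp_rw [hf_exp]
  exact ConvexOn.log_sum convex_univ
    (fun k _ x _ => mul_pos (hc k) (prod_pos fun i _ => rpow_pos_of_pos (exp_pos _) _))
    fun k _ => convexOn_log_mul_prod_exp_rpow (hc k) (a k)
end

section
/- For the one-round problem with n independent modules (diagonal WTM), total remaining work Σᵢ φᵢ Pᵢ(0), cost functions fᵢ(φᵢ) = cᵢ(1/φᵢ − 1/φ̄ᵢ), and budget B̄ large enough that the box constraints are inactive, the optimal completion rates satisfy φᵢ* proportional to (cᵢ / Pᵢ(0))^{1/2}; i.e., at optimum, modules with more initial remaining work relative to cost receive smaller (better) completion rates. -/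
/-!
At an interior optimum, trade budget between two modules `i ≠ j` along the line
`1/φᵢ ↦ 1/φᵢ + ε/cᵢ`, `1/φⱼ ↦ 1/φⱼ - ε/cⱼ`: the budget is unchanged and, for small `ε`,
the box constraints still hold, so `ε = 0` is a local minimum of the objective along this
line. Its derivative there vanishes, which gives `Pᵢ φᵢ² / cᵢ = Pⱼ φⱼ² / cⱼ` (the Lagrange
condition `Pᵢ = λ cᵢ / φᵢ²`), and the common value is `t²`.
-/

open Finset Filter Topology

theorem hasDerivAt_inv_inv_add_mul {a : ℝ} (ha : a ≠ 0) (r : ℝ) :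
    HasDerivAt (fun ε : ℝ => (a⁻¹ + ε * r)⁻¹) (-(a ^ 2 * r)) 0 := by
  have h := (((hasDerivAt_id (0 : ℝ)).mul_const r).const_add a⁻¹).inv (by simpa using ha)
  simp only [id, zero_mul, add_zero, one_mul, inv_pow, div_inv_eq_mul, neg_mul] at h
  rwa [mul_comm] at h

variable {ι : Type*}

theorem exists_pos_eq_mul_sqrt_div_of_mul_sq_div_eq {P c φ : ι → ℝ} (hP : ∀ i, 0 < P i)
    (hc : ∀ i, 0 < c i) (hφ : ∀ i, 0 < φ i)
    (hbal : ∀ i j, P i * φ i ^ 2 / c i = P j * φ j ^ 2 / c j) :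
    ∃ t, 0 < t ∧ ∀ i, φ i = t * √(c i / P i) := by
  cases isEmpty_or_nonempty ι
  · exact ⟨1, one_pos, isEmptyElim⟩
  obtain ⟨i₀⟩ := ‹Nonempty ι›
  set K := P i₀ * φ i₀ ^ 2 / c i₀
  have hK : 0 < K := by have := hP i₀; have := hc i₀; have := hφ i₀; positivity
  refine ⟨√K, Real.sqrt_pos.2 hK, fun i => ?_⟩
  have hsq : φ i ^ 2 = K * (c i / P i) := by
    rw [show K = _ from (hbal i i₀).symm]
    field_simp [(hP i).ne', (hc i).ne']
  rw [← Real.sqrt_mul hK.le, ← hsq, Real.sqrt_sq (hφ i).le]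

variable [Fintype ι]

def feasibleRates (c φbar : ι → ℝ) (B : ℝ) : Set (ι → ℝ) :=
  {φ | (∀ i, 0 < φ i ∧ φ i ≤ φbar i) ∧ ∑ i, c i * (1 / φ i - 1 / φbar i) ≤ B}

theorem sum_mul_add_mul_sub_eq_of_sum_mul_eq_zero {c a b w : ι → ℝ}
    (hw : ∑ i, c i * w i = 0) (ε : ℝ) :
    ∑ i, c i * (a i + ε * w i - b i) = ∑ i, c i * (a i - b i) :=
  calc _ = ∑ i, (c i * (a i - b i) + ε * (c i * w i)) :=
        sum_congr rfl fun i _ => by ring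
    _ = _ := by rw [sum_add_distrib, ← mul_sum, hw, mul_zero, add_zero]

theorem sum_mul_sq_mul_eq_zero_of_isMinOn {P c φbar : ι → ℝ} {B : ℝ} {φ : ι → ℝ}
    (hmin : IsMinOn (fun ψ => ∑ i, ψ i * P i) (feasibleRates c φbar B) φ)
    (hφ : φ ∈ feasibleRates c φbar B) (hint : ∀ i, φ i < φbar i)
    {w : ι → ℝ} (hw : ∑ i, c i * w i = 0) :
    ∑ i, P i * φ i ^ 2 * w i = 0 := by
  obtain ⟨hbox, hbudget⟩ := hφ
  have hφ0 (i : ι) : φ i ≠ 0 := (hbox i).1.ne'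
  -- move along the line `1 / ψ = 1 / φ + ε w`, on which the budget is constant
  set γ : ℝ → ι → ℝ := fun ε i => ((φ i)⁻¹ + ε * w i)⁻¹
  have hγ0 : γ 0 = φ := by ext i; simp [γ]
  have hγ_cont : ContinuousAt γ 0 := continuousAt_pi.2 fun i =>
    (continuous_const.add (continuous_id.mul continuous_const)).continuousAt.inv₀
      (by simpa using hφ0 i)
  have hbox_open : IsOpen (Set.univ.pi fun i => Set.Ioo 0 (φbar i)) :=
    isOpen_set_pi Set.finite_univ fun _ _ => isOpen_Ioo
  have hγ_box : ∀ᶠ ε in 𝓝 0, γ ε ∈ Set.univ.pi fun i => Set.Ioo 0 (φbar i) :=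
    hγ_cont.preimage_mem_nhds (hγ0 ▸ hbox_open.mem_nhds fun i _ => ⟨(hbox i).1, hint i⟩)
  have hlocal : IsLocalMin (fun ε => ∑ i, γ ε i * P i) 0 := by
    filter_upwards [hγ_box] with ε hε
    have hfeas : γ ε ∈ feasibleRates c φbar B := by
      refine ⟨fun i => ⟨(hε i trivial).1, (hε i trivial).2.le⟩, ?_⟩
      simpa only [γ, one_div, inv_inv, sum_mul_add_mul_sub_eq_of_sum_mul_eq_zero hw] using hbudget
    simpa [hγ0] using isMinOn_iff.1 hmin _ hfeas
  have hderiv : HasDerivAt (fun ε => ∑ i, γ ε i * P i) (∑ i, -(φ i ^ 2 * w i) * P i) 0 :=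
    HasDerivAt.fun_sum fun i _ => by
      simpa only [inv_inv] using (hasDerivAt_inv_inv_add_mul (hφ0 i) (w i)).mul_const (P i)
  rw [← neg_eq_zero, ← sum_neg_distrib, ← hlocal.hasDerivAt_eq_zero hderiv]
  exact sum_congr rfl fun i _ => by ring

theorem mul_sq_div_eq_of_isMinOn {P c φbar : ι → ℝ} {B : ℝ} {φ : ι → ℝ}
    (hmin : IsMinOn (fun ψ => ∑ i, ψ i * P i) (feasibleRates c φbar B) φ)
    (hφ : φ ∈ feasibleRates c φbar B) (hint : ∀ i, φ i < φbar i) (hc : ∀ i, c i ≠ 0)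
    (i j : ι) : P i * φ i ^ 2 / c i = P j * φ j ^ 2 / c j := by
  classical
  rcases eq_or_ne i j with rfl | hij
  · rfl
  have h := sum_mul_sq_mul_eq_zero_of_isMinOn hmin hφ hint
    (w := Pi.single i (c i)⁻¹ - Pi.single j (c j)⁻¹) (by simp [mul_sub, Pi.single_apply, hc])
  simp only [Pi.sub_apply, mul_sub, sum_sub_distrib, Pi.single_apply, mul_ite, mul_zero,
    sum_ite_eq', mem_univ, if_true] at h
  rw [← sub_eq_zero, ← h]
  ring

theorem one_round_diagonal_optimal_rates_general (n : ℕ)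
    (P0 c φbar : Fin n → ℝ)
    (hP0 : ∀ i, 0 < P0 i) (hc : ∀ i, 0 < c i)
    (Bbar : ℝ)
    (S : Set (Fin n → ℝ))
    (hS : S = {φ | (∀ i, 0 < φ i ∧ φ i ≤ φbar i) ∧
      ∑ i, c i * (1 / φ i - 1 / φbar i) ≤ Bbar})
    (φstar : Fin n → ℝ) (hmem : φstar ∈ S)
    (hopt : ∀ φ ∈ S, ∑ i, φstar i * P0 i ≤ ∑ i, φ i * P0 i)
    (hinterior : ∀ i, φstar i < φbar i) :
    ∃ t : ℝ, 0 < t ∧ ∀ i, φstar i = t * Real.sqrt (c i / P0 i) := by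
  subst hS
  exact exists_pos_eq_mul_sqrt_div_of_mul_sq_div_eq hP0 hc (fun i => (hmem.1 i).1)
    (mul_sq_div_eq_of_isMinOn (isMinOn_iff.2 hopt) hmem hinterior fun i => (hc i).ne')

/-- One-round problem with `n` independent modules (diagonal WTM): if `φ*`
minimizes the total remaining work `∑ i, φ i * P0 i` over the feasible set
determined by the budget constraint `∑ i, c i * (1/φ i - 1/φ̄ i) ≤ B̄` and
the box constraints `0 < φ i ≤ φ̄ i`, and the box constraints are inactive at
`φ*` (budget large enough), then the optimal completion rates satisfy
`φ* i ∝ √(c i / P0 i)`. -/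
theorem one_round_diagonal_optimal_rates (n : ℕ)
    (P0 c φbar : Fin n → ℝ)
    (hP0 : ∀ i, 0 < P0 i) (hc : ∀ i, 0 < c i) (hφbar : ∀ i, 0 < φbar i)
    (Bbar : ℝ)
    (S : Set (Fin n → ℝ))
    (hS : S = {φ | (∀ i, 0 < φ i ∧ φ i ≤ φbar i) ∧
      ∑ i, c i * (1 / φ i - 1 / φbar i) ≤ Bbar})
    (φstar : Fin n → ℝ) (hmem : φstar ∈ S)
    (hopt : ∀ φ ∈ S, ∑ i, φstar i * P0 i ≤ ∑ i, φ i * P0 i)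
    (hinterior : ∀ i, φstar i < φbar i) :
    ∃ t : ℝ, 0 < t ∧ ∀ i, φstar i = t * Real.sqrt (c i / P0 i) :=
  one_round_diagonal_optimal_rates_general n P0 c φbar hP0 hc Bbar S hS φstar hmem hopt hinterior
end
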